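/- arXiv:2503.18144 — 6 statements merged into one kernel-verified Lean document; each statement's English description precedes it below -/
import Mathlib

section
/- In a Shapley-Scarf market with an objective indifferences domain R(H) induced by a partition 𝓗 of the houses, every TTC-with-fixed-tie-breaking mechanism TTC_≻ is Pareto efficient: for every preference profile R in R(𝓗)^n, there is no allocation y with y_i R_i TTC_≻(R)_i for all agents i and y_i P_i TTC_≻(R)_i for some agent i. -/
open scoped Classical

namespace ShapleyScarf

/-- A weak preference relation: complete (total) and transitive, hence reflexive. -/
structure WeakOrder (H : Type*) where
  rel : H → H → Prop
  total : ∀ a b, rel a b ∨ rel b a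
  trans : ∀ a b c, rel a b → rel b c → rel a c

namespace WeakOrder
variable {H : Type*}
/-- Strict part `P` of a weak preference. -/
def P (R : WeakOrder H) (a b : H) : Prop := R.rel a b ∧ ¬ R.rel b a
/-- Indifference part `I` of a weak preference. -/
def I (R : WeakOrder H) (a b : H) : Prop := R.rel a b ∧ R.rel b a
end WeakOrder

/-- `lt` is a strict linear order on agents (a tie-breaking order). -/
def IsTieBreak {n : ℕ} (lt : Fin n → Fin n → Prop) : Prop :=
  (∀ a b, a ≠ b → lt a b ∨ lt b a) ∧ Transitive lt ∧ ∀ a, ¬ lt a a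

section Defs
variable {n : ℕ} {H : Type*} {B : Type*}

/-- Strict part of the tie-broken preference `P_{i,≻}`: `a` above `b` iff
`a P b`, or `a I b` and the owner of `a` comes before the owner of `b` in `≻_i`. -/
def tieBroken (w : Fin n ≃ H) (R : WeakOrder H) (lt : Fin n → Fin n → Prop) (a b : H) : Prop :=
  R.P a b ∨ (R.I a b ∧ lt (w.symm a) (w.symm b))

/-- The weak tie-broken relation `R_{i,≻}` (reflexive closure of the strict part). -/
def tieBrokenWeak (w : Fin n ≃ H) (R : WeakOrder H) (lt : Fin n → Fin n → Prop)
    (a b : H) : Prop :=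
  a = b ∨ tieBroken w R lt a b

/-- The owner (in `S`) of the `pref`-best house among the endowments of the
remaining agents `S`; the agent with this endowment is whom `i` points at. -/
noncomputable def point (w : Fin n ≃ H) (pref : H → H → Prop) (S : Finset (Fin n))
    (i : Fin n) : Fin n :=
  if h : (S.filter fun m => ∀ j ∈ S, j = m ∨ pref (w m) (w j)).Nonempty then
    (S.filter fun m => ∀ j ∈ S, j = m ∨ pref (w m) (w j)).min' h
  else i

/-- The agents of `S` lying on some trading cycle of the pointing map. -/
noncomputable def cycleAgents (w : Fin n ≃ H) (pref : Fin n → H → H → Prop)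
    (S : Finset (Fin n)) : Finset (Fin n) :=
  S.filter fun i => ∃ k, 0 < k ∧ (fun j => point w (pref j) S j)^[k] i = i

/-- Top trading cycles on strict preferences, fuel-based recursion: in each round all
current trading cycles are executed and their agents removed. -/
noncomputable def TTCaux (w : Fin n ≃ H) (pref : Fin n → H → H → Prop) :
    ℕ → Finset (Fin n) → Fin n → H
  | 0, _, i => w i
  | fuel + 1, S, i =>
      if i ∈ cycleAgents w pref S then w (point w (pref i) S i)
      else TTCaux w pref fuel (S \ cycleAgents w pref S) i

/-- Gale's top trading cycles algorithm for a strict preference profile. -/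
noncomputable def TTCstrict (w : Fin n ≃ H) (pref : Fin n → H → H → Prop) : Fin n → H :=
  TTCaux w pref n Finset.univ

/-- Round (executed-cycle index, starting from 1) at which an agent is assigned. -/
noncomputable def TTCroundAux (w : Fin n ≃ H) (pref : Fin n → H → H → Prop) :
    ℕ → Finset (Fin n) → Fin n → ℕ
  | 0, _, _ => 1
  | fuel + 1, S, i =>
      if i ∈ cycleAgents w pref S then 1
      else TTCroundAux w pref fuel (S \ cycleAgents w pref S) i + 1

/-- TTC with fixed tie-breaking: `TTC_≻(R) = TTC(R_≻)`. -/
noncomputable def TTCtb (w : Fin n ≃ H) (R : Fin n → WeakOrder H)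
    (tb : Fin n → Fin n → Fin n → Prop) : Fin n → H :=
  TTCstrict w fun i => tieBroken w (R i) (tb i)

/-- The round in which agent `i` is assigned under `TTC_≻(R)`. -/
noncomputable def TTCtbRound (w : Fin n ≃ H) (R : Fin n → WeakOrder H)
    (tb : Fin n → Fin n → Fin n → Prop) (i : Fin n) : ℕ :=
  TTCroundAux w (fun a => tieBroken w (R a) (tb a)) n Finset.univ i

/-- Objective indifferences w.r.t. the partition of `H` into the fibers of `blk`:
indifference holds exactly between houses in the same block. -/
def ObjInd (blk : H → B) (R : WeakOrder H) : Prop :=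
  ∀ a b, R.I a b ↔ blk a = blk b

/-- `x` is blocked: some coalition `Q` can reallocate its own endowments making
all its members weakly better off and one strictly better off. -/
def Blocks (w : Fin n ≃ H) (R : Fin n → WeakOrder H) (x : Fin n → H) : Prop :=
  ∃ (Q : Finset (Fin n)) (y : Fin n ≃ H),
    Q.image (⇑y) = Q.image (⇑w) ∧
    (∀ i ∈ Q, (R i).rel (y i) (x i)) ∧
    ∃ i ∈ Q, (R i).P (y i) (x i)

/-- `x` is weakly blocked: some nonempty coalition can reallocate its own
endowments making all of its members strictly better off. -/
def WeaklyBlocks (w : Fin n ≃ H) (R : Fin n → WeakOrder H) (x : Fin n → H) : Prop :=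
  ∃ Q : Finset (Fin n), Q.Nonempty ∧ ∃ y : Fin n ≃ H,
    Q.image (⇑y) = Q.image (⇑w) ∧ ∀ i ∈ Q, (R i).P (y i) (x i)

/-- `y` Pareto dominates `x`. -/
def ParetoDom (R : Fin n → WeakOrder H) (y x : Fin n → H) : Prop :=
  (∀ i, (R i).rel (y i) (x i)) ∧ ∃ i, (R i).P (y i) (x i)

end Defs

/-!
Under objective indifferences every agent is indifferent exactly between houses of the same block.
Given a Pareto improvement `y₀` on `x = TTC_≻(R)`, swapping houses inside blocks yields an
allocation `y` with the same blocks as `y₀` that coincides with `x` for every agent whose block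
did not change. Every agent then keeps `x i` or is strictly better off under `R`, hence under the
tie-broken `R_≻`. TTC on strict preferences is Pareto efficient, because every agent on a cycle
of a round gets its favourite house among those still present; so `y = x`, contradicting the
strict improvement of `y₀`.
-/

open Finset Function

namespace WeakOrder

variable {H : Type*} {R : WeakOrder H} {a b c : H}

lemma P_of_P_of_rel (h : R.P a b) (h' : R.rel b c) : R.P a c :=
  ⟨R.trans _ _ _ h.1 h', fun hca => h.2 (R.trans _ _ _ h' hca)⟩

lemma P_of_rel_of_P (h : R.rel a b) (h' : R.P b c) : R.P a c :=
  ⟨R.trans _ _ _ h h'.1, fun hca => h'.2 (R.trans _ _ _ hca h)⟩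

end WeakOrder

namespace ObjInd

variable {H B : Type*} {blk : H → B} {R : WeakOrder H} {a b : H}

lemma rel_of_blk_eq (h : ObjInd blk R) (hab : blk a = blk b) : R.rel a b :=
  ((h a b).2 hab).1

lemma P_iff_blk_ne (h : ObjInd blk R) (hab : R.rel a b) : R.P a b ↔ blk a ≠ blk b := by
  rw [ne_eq, ← h a b]
  exact ⟨fun hP hI => hP.2 hI.2, fun hI => ⟨hab, fun hba => hI ⟨hab, hba⟩⟩⟩

end ObjInd

section TieBreak

variable {n : ℕ} {H : Type*} (w : Fin n ≃ H) (R : WeakOrder H) {lt : Fin n → Fin n → Prop}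

lemma rel_of_tieBroken {a b : H} (h : tieBroken w R lt a b) : R.rel a b :=
  h.elim (·.1) (·.1.1)

lemma isStrictTotalOrder_tieBroken (hlt : IsTieBreak lt) :
    IsStrictTotalOrder H (tieBroken w R lt) where
  irrefl a h := h.elim (fun hP => hP.2 hP.1) (fun hI => hlt.2.2 _ hI.2)
  trans a b c hab hbc := by
    rcases hab with hab | ⟨hIab, hlab⟩
    · exact Or.inl (WeakOrder.P_of_P_of_rel hab (rel_of_tieBroken w R hbc))
    rcases hbc with hbc | ⟨hIbc, hlbc⟩
    · exact Or.inl (WeakOrder.P_of_rel_of_P hIab.1 hbc)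
    · exact Or.inr ⟨⟨R.trans _ _ _ hIab.1 hIbc.1, R.trans _ _ _ hIbc.2 hIab.2⟩,
        hlt.2.1 hlab hlbc⟩
  trichotomous a b hab hba := by
    by_contra hne
    by_cases hr : R.rel a b <;> by_cases hr' : R.rel b a
    · rcases hlt.1 _ _ (w.symm.injective.ne hne) with h | h
      · exact hab (Or.inr ⟨⟨hr, hr'⟩, h⟩)
      · exact hba (Or.inr ⟨⟨hr', hr⟩, h⟩)
    · exact hab (Or.inl ⟨hr, hr'⟩)
    · exact hba (Or.inl ⟨hr', hr⟩)
    · exact (R.total a b).elim hr hr'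

end TieBreak

section Point

variable {n : ℕ} {H : Type*} (w : Fin n ≃ H) (p : H → H → Prop) [IsStrictTotalOrder H p]
  {S : Finset (Fin n)}

lemma exists_top_endowment (hS : S.Nonempty) : ∃ m ∈ S, ∀ j ∈ S, j = m ∨ p (w m) (w j) := by
  let := linearOrderOfSTO p
  obtain ⟨m, hm, hmin⟩ := S.exists_min_image w hS
  exact ⟨m, hm, fun j hj => (hmin j hj).imp (fun h => (w.injective h).symm) id⟩

lemma point_mem_filter (hS : S.Nonempty) (i : Fin n) :
    point w p S i ∈ S.filter fun m => ∀ j ∈ S, j = m ∨ p (w m) (w j) := by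
  obtain ⟨m, hm, htop⟩ := exists_top_endowment w p hS
  have hne : (S.filter fun m => ∀ j ∈ S, j = m ∨ p (w m) (w j)).Nonempty :=
    ⟨m, mem_filter.2 ⟨hm, htop⟩⟩
  rw [point, dif_pos hne]
  exact min'_mem _ hne

lemma point_mem (hS : S.Nonempty) (i : Fin n) : point w p S i ∈ S :=
  (mem_filter.1 (point_mem_filter w p hS i)).1

lemma not_pref_point {m : Fin n} (hm : m ∈ S) (i : Fin n) : ¬ p (w m) (w (point w p S i)) := by
  rcases (mem_filter.1 (point_mem_filter w p ⟨m, hm⟩ i)).2 m hm with h | h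
  · rw [← h]
    exact irrefl _
  · exact asymm h

end Point

section Cycles

variable {n : ℕ} {H : Type*} (w : Fin n ≃ H) (pref : Fin n → H → H → Prop) (S : Finset (Fin n))

noncomputable def pointMap : Fin n → Fin n := fun j => point w (pref j) S j

lemma mem_cycleAgents {i : Fin n} :
    i ∈ cycleAgents w pref S ↔ i ∈ S ∧ i ∈ periodicPts (pointMap w pref S) :=
  mem_filter

variable [∀ i, IsStrictTotalOrder H (pref i)]

lemma mapsTo_pointMap (hS : S.Nonempty) : Set.MapsTo (pointMap w pref S) S S :=
  fun i _ => point_mem w (pref i) hS i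

lemma cycleAgents_nonempty (hS : S.Nonempty) : (cycleAgents w pref S).Nonempty := by
  obtain ⟨i, hi⟩ := hS
  have hiter : ∀ k, (pointMap w pref S)^[k] i ∈ S :=
    fun k => (mapsTo_pointMap w pref S ⟨i, hi⟩).iterate k hi
  obtain ⟨a, b, hab, heq⟩ := S.finite_toSet.exists_lt_map_eq_of_forall_mem hiter
  refine ⟨_, (mem_cycleAgents w pref S).2 ⟨hiter a, mk_mem_periodicPts (Nat.sub_pos_of_lt hab) ?_⟩⟩
  change (pointMap w pref S)^[b - a] ((pointMap w pref S)^[a] i) = _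
  rw [← iterate_add_apply, Nat.sub_add_cancel hab.le, heq]

lemma image_pointMap_cycleAgents :
    (cycleAgents w pref S).image (pointMap w pref S) = cycleAgents w pref S := by
  have hper : ∀ i ∈ cycleAgents w pref S, i ∈ periodicPts (pointMap w pref S) :=
    fun i hi => ((mem_cycleAgents w pref S).1 hi).2
  apply eq_of_subset_of_card_le
  · intro j hj
    obtain ⟨i, hi, rfl⟩ := mem_image.1 hj
    have hiS := ((mem_cycleAgents w pref S).1 hi).1
    exact (mem_cycleAgents w pref S).2
      ⟨mapsTo_pointMap w pref S ⟨i, hiS⟩ hiS, (bijOn_periodicPts _).mapsTo (hper i hi)⟩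
  · rw [card_image_of_injOn ((bijOn_periodicPts _).injOn.mono hper)]

lemma card_sdiff_cycleAgents_lt (hS : S.Nonempty) : (S \ cycleAgents w pref S).card < S.card :=
  card_lt_card (sdiff_ssubset (filter_subset _ _) (cycleAgents_nonempty w pref S hS))

end Cycles

lemma _root_.Finset.image_sdiff_eq_of_image_eq {α β : Type*} [DecidableEq α] [DecidableEq β]
    {f g : α → β} {s t : Finset α} (hg : Set.InjOn g s) (hts : t ⊆ s)
    (hs : s.image f = s.image g) (ht : t.image f = t.image g) :
    (s \ t).image f = (s \ t).image g := by
  have hf : Set.InjOn f s := card_image_iff.1 (by rw [hs, card_image_of_injOn hg])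
  rw [image_sdiff_of_injOn hf hts, image_sdiff_of_injOn hg hts, hs, ht]

section TTC

variable {n : ℕ} {H : Type*} (w : Fin n ≃ H) (pref : Fin n → H → H → Prop)

lemma TTCaux_succ_of_mem {fuel : ℕ} {S : Finset (Fin n)} {i : Fin n}
    (h : i ∈ cycleAgents w pref S) : TTCaux w pref (fuel + 1) S i = w (pointMap w pref S i) := by
  rw [TTCaux, if_pos h, pointMap]

lemma TTCaux_succ_of_notMem {fuel : ℕ} {S : Finset (Fin n)} {i : Fin n}
    (h : i ∉ cycleAgents w pref S) :
    TTCaux w pref (fuel + 1) S i = TTCaux w pref fuel (S \ cycleAgents w pref S) i := by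
  rw [TTCaux, if_neg h]

variable [∀ i, IsStrictTotalOrder H (pref i)]

lemma image_TTCaux_cycleAgents (fuel : ℕ) (S : Finset (Fin n)) :
    (cycleAgents w pref S).image (TTCaux w pref (fuel + 1) S) =
      (cycleAgents w pref S).image w := by
  calc (cycleAgents w pref S).image (TTCaux w pref (fuel + 1) S)
      = (cycleAgents w pref S).image (w ∘ pointMap w pref S) :=
        image_congr fun i hi => TTCaux_succ_of_mem w pref hi
    _ = ((cycleAgents w pref S).image (pointMap w pref S)).image w := image_image.symm
    _ = (cycleAgents w pref S).image w := by rw [image_pointMap_cycleAgents]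

lemma image_TTCaux (fuel : ℕ) (S : Finset (Fin n)) (hfuel : S.card ≤ fuel) :
    S.image (TTCaux w pref fuel S) = S.image w := by
  induction fuel generalizing S with
  | zero => simp [card_eq_zero.1 (Nat.le_zero.1 hfuel)]
  | succ fuel ih =>
    rcases S.eq_empty_or_nonempty with rfl | hS
    · simp
    set C := cycleAgents w pref S
    have hC : C ⊆ S := filter_subset _ _
    have hcard : (S \ C).card < S.card := card_sdiff_cycleAgents_lt w pref S hS
    calc S.image (TTCaux w pref (fuel + 1) S)
        = C.image (TTCaux w pref (fuel + 1) S) ∪ (S \ C).image (TTCaux w pref (fuel + 1) S) := by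
          rw [← image_union, union_sdiff_of_subset hC]
      _ = C.image w ∪ (S \ C).image w := by
          rw [image_TTCaux_cycleAgents, ← ih (S \ C) (by omega)]
          exact congrArg _ (image_congr fun i hi => TTCaux_succ_of_notMem w pref (mem_sdiff.1 hi).2)
      _ = S.image w := by rw [← image_union, union_sdiff_of_subset hC]

lemma TTCaux_eqOn_of_forall_eq_or_pref (fuel : ℕ) (S : Finset (Fin n)) (hfuel : S.card ≤ fuel)
    (y : Fin n → H) (hy : S.image y = S.image w)
    (hpref : ∀ i ∈ S, y i = TTCaux w pref fuel S i ∨ pref i (y i) (TTCaux w pref fuel S i)) :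
    Set.EqOn y (TTCaux w pref fuel S) S := by
  induction fuel generalizing S with
  | zero => simp [card_eq_zero.1 (Nat.le_zero.1 hfuel)]
  | succ fuel ih =>
    rcases S.eq_empty_or_nonempty with rfl | hS
    · simp
    set C := cycleAgents w pref S
    have hC : C ⊆ S := filter_subset _ _
    have hyC : ∀ i ∈ C, y i = TTCaux w pref (fuel + 1) S i := by
      intro i hi
      refine (hpref i (hC hi)).resolve_right fun hlt => ?_
      obtain ⟨m, hm, hmy⟩ := mem_image.1 (hy ▸ mem_image_of_mem y (hC hi))
      rw [TTCaux_succ_of_mem w pref hi, ← hmy] at hlt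
      exact not_pref_point w (pref i) hm i hlt
    have hyrest : (S \ C).image y = (S \ C).image w :=
      Finset.image_sdiff_eq_of_image_eq w.injective.injOn hC hy
        ((image_congr hyC).trans (image_TTCaux_cycleAgents w pref fuel S))
    have hcard : (S \ C).card < S.card := card_sdiff_cycleAgents_lt w pref S hS
    have hrest := ih (S \ C) (by omega) hyrest
      fun i hi => TTCaux_succ_of_notMem w pref (mem_sdiff.1 hi).2 ▸ hpref i (mem_sdiff.1 hi).1
    intro i hi
    by_cases hiC : i ∈ C
    · exact hyC i hiC
    · rw [TTCaux_succ_of_notMem w pref hiC]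
      exact hrest (mem_sdiff.2 ⟨hi, hiC⟩)

lemma TTCstrict_injective : Injective (TTCstrict w pref) := by
  have himage := image_TTCaux w pref n univ (by simp)
  rw [← Set.injOn_univ, ← coe_univ, ← card_image_iff, TTCstrict, himage, card_image_of_injective _ w.injective]

lemma eq_TTCstrict_of_forall_eq_or_pref (y : Fin n ≃ H)
    (hpref : ∀ i, y i = TTCstrict w pref i ∨ pref i (y i) (TTCstrict w pref i)) :
    ⇑y = TTCstrict w pref := by
  have : Fintype H := Fintype.ofEquiv _ w
  funext i
  refine TTCaux_eqOn_of_forall_eq_or_pref w pref n univ (by simp) y ?_ (fun i _ => hpref i)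
    (mem_univ i)
  rw [image_univ_of_surjective y.surjective, image_univ_of_surjective w.surjective]

end TTC

lemma exists_equiv_comp_eq_and_eq_of_comp_eq {α β γ : Type*} [Finite α] {x : α → β}
    (hx : Injective x) (f : β → γ) (y₀ : α ≃ β) :
    ∃ y : α ≃ β, f ∘ y = f ∘ y₀ ∧ ∀ i, f (y i) = f (x i) → y i = x i := by
  classical
  obtain ⟨y, hy, hmax⟩ := (Set.toFinite {y : α ≃ β | f ∘ y = f ∘ y₀}).exists_maximalFor
    (fun y => {i | y i = x i}) _ ⟨y₀, rfl⟩
  refine ⟨y, hy, fun i hi => by_contra fun hne => ?_⟩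
  -- swapping the houses `y i` and `x i` preserves `f ∘ y` and keeps every agreement with `x`
  let z := y.trans (Equiv.swap (y i) (x i))
  have hz : f ∘ z = f ∘ y₀ := by
    rw [← hy]
    funext k
    simp only [comp_apply, z, Equiv.trans_apply, Equiv.swap_apply_def]
    split_ifs with h₁ h₂
    · rw [h₁, hi]
    · rw [h₂, hi]
    · rfl
  have hagree : {k | y k = x k} ⊆ {k | z k = x k} := by
    intro k (hk : y k = x k)
    have hki : k ≠ i := fun h => hne (h ▸ hk)
    have hxk : y k ≠ x i := by rw [hk]; exact hx.ne hki
    show Equiv.swap (y i) (x i) (y k) = x k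
    rw [Equiv.swap_apply_of_ne_of_ne (y.injective.ne hki) hxk, hk]
  exact hne (hmax hz hagree (by simp [z]))

/-- on an objective indifferences domain, every `TTC_≻` mechanism is
Pareto efficient. -/
theorem TTCtb_paretoEfficient_objInd {n : ℕ} {H B : Type*} (w : Fin n ≃ H)
    (blk : H → B) (R : Fin n → WeakOrder H) (hR : ∀ i, ObjInd blk (R i))
    (tb : Fin n → Fin n → Fin n → Prop) (htb : ∀ i, IsTieBreak (tb i)) :
    ¬ ∃ y : Fin n ≃ H, ParetoDom R (⇑y) (TTCtb w R tb) := by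
  rintro ⟨y₀, hweak, i₀, hstrict⟩
  have : ∀ i, IsStrictTotalOrder H (tieBroken w (R i) (tb i)) :=
    fun i => isStrictTotalOrder_tieBroken w (R i) (htb i)
  set x := TTCtb w R tb
  obtain ⟨y, hblk, hagree⟩ := exists_equiv_comp_eq_and_eq_of_comp_eq
    (TTCstrict_injective w fun i => tieBroken w (R i) (tb i)) blk y₀
  have hblk' : ∀ i, blk (y i) = blk (y₀ i) := congr_fun hblk
  have hyx : ⇑y = x := by
    refine eq_TTCstrict_of_forall_eq_or_pref w _ y fun i => ?_
    by_cases hb : blk (y₀ i) = blk (x i)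
    · exact Or.inl (hagree i ((hblk' i).trans hb))
    · exact Or.inr (Or.inl (WeakOrder.P_of_rel_of_P ((hR i).rel_of_blk_eq (hblk' i))
        (((hR i).P_iff_blk_ne (hweak i)).2 hb)))
  exact ((hR i₀).P_iff_blk_ne hstrict.1).1 hstrict (by rw [← hblk' i₀, hyx])

end ShapleyScarf
end

section
/- If x and y are both allocations in the core of a Shapley-Scarf market with preferences drawn from an objective indifferences domain, then x_i I_i y_i for every agent i (the core is essentially single-valued). -/
open scoped Classical

namespace ShapleyScarf

/-!
Run top trading cycles on both core allocations at once. Let `S` be the agents still to be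
treated and let each agent point to the owner of a best endowment in `S`. On the periodic points
`C` of this pointer map, trading along the pointers reallocates the endowments of `C`; if this
makes every agent of `C` weakly better off, it cannot make anyone strictly better off, so a core
allocation gives each agent of `C` a house indifferent to the one pointed at. Every agent of `S`
is indeed weakly better off with a best endowment of `S` as long as the allocation hands out, on
`S`, the same multiset of blocks as the endowments of `S` do. Under objective indifference the
agents of `C` then receive exactly the blocks of `C`'s endowments, so this invariant passes to
`S \ C`, and we recurse.
-/

theorem _root_.Function.periodicPts_nonempty {α : Type*} [Finite α] [Nonempty α]
    (f : α → α) : (Function.periodicPts f).Nonempty := by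
  obtain ⟨m, k, hmk, heq⟩ :=
    Finite.exists_ne_map_eq_of_infinite fun k : ℕ => f^[k] (Classical.arbitrary α)
  wlog hlt : m < k generalizing m k
  · exact this k m hmk.symm heq.symm (hmk.lt_or_gt.resolve_left hlt)
  obtain ⟨d, rfl⟩ := Nat.exists_eq_add_of_lt hlt
  refine ⟨f^[m] (Classical.arbitrary α), Function.mk_mem_periodicPts d.succ_pos ?_⟩
  rw [Function.IsPeriodicPt, Function.IsFixedPt, ← Function.iterate_add_apply, heq,
    show d.succ + m = m + d + 1 by omega]

theorem _root_.Function.exists_perm_eqOn_periodicPts {α : Type*} (f : α → α) :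
    ∃ σ : Equiv.Perm α, Set.EqOn σ f (Function.periodicPts f) :=
  ⟨Equiv.Perm.ofSubtype ((Function.bijOn_periodicPts f).equiv f), fun a ha => by
    simp [Equiv.Perm.ofSubtype_apply_of_mem _ ha, Set.BijOn.equiv]⟩

namespace WeakOrder

variable {H : Type*} (R : WeakOrder H)

theorem refl (a : H) : R.rel a a :=
  (R.total a a).elim id id

theorem exists_forall_rel {α : Type*} (g : α → H) {S : Finset α} (hS : S.Nonempty) :
    ∃ m ∈ S, ∀ k ∈ S, R.rel (g m) (g k) := by
  induction hS using Finset.Nonempty.cons_induction with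
  | singleton a => simpa using R.refl (g a)
  | cons a s _ _ ih =>
    obtain ⟨m, hm, hmax⟩ := ih
    rcases R.total (g a) (g m) with ham | hma
    · exact ⟨a, Finset.mem_cons_self a s,
        (Finset.forall_mem_cons _ _).2 ⟨R.refl _, fun k hk => R.trans _ _ _ ham (hmax k hk)⟩⟩
    · exact ⟨m, Finset.mem_cons_of_mem hm, (Finset.forall_mem_cons _ _).2 ⟨hma, hmax⟩⟩

variable {R}

theorem I.symm {a b : H} (h : R.I a b) : R.I b a :=
  ⟨h.2, h.1⟩

theorem I.trans {a b c : H} (hab : R.I a b) (hbc : R.I b c) : R.I a c :=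
  ⟨R.trans _ _ _ hab.1 hbc.1, R.trans _ _ _ hbc.2 hab.2⟩

end WeakOrder

def blockMultiset {ι H B : Type*} (blk : H → B) (x : ι → H) (S : Finset ι) : Multiset B :=
  ∑ i ∈ S, {blk (x i)}

section BlockMultiset

variable {ι H B : Type*} {blk : H → B} {x y : ι → H} {S C : Finset ι}

theorem blockMultiset_sdiff [DecidableEq ι] (hS : blockMultiset blk x S = blockMultiset blk y S)
    (hC : blockMultiset blk x C = blockMultiset blk y C) (hCS : C ⊆ S) :
    blockMultiset blk x (S \ C) = blockMultiset blk y (S \ C) := by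
  unfold blockMultiset at *
  rw [← Finset.sum_sdiff hCS (f := fun i => ({blk (x i)} : Multiset B)),
    ← Finset.sum_sdiff hCS (f := fun i => ({blk (y i)} : Multiset B)), hC] at hS
  exact add_right_cancel hS

theorem blockMultiset_comp_of_image_eq [DecidableEq ι] {σ : ι → ι} (hσ : Set.InjOn σ S)
    (hσS : S.image σ = S) :
    blockMultiset blk (x ∘ σ) S = blockMultiset blk x S := by
  unfold blockMultiset
  conv_rhs => rw [← hσS]
  exact (Finset.sum_image (f := fun i => ({blk (x i)} : Multiset B)) hσ).symm

theorem blockMultiset_univ_of_equiv [Fintype ι] (x y : ι ≃ H) :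
    blockMultiset blk x Finset.univ = blockMultiset blk y Finset.univ := by
  simpa [blockMultiset] using Equiv.sum_comp (x.trans y.symm) fun i => {blk (y i)}

theorem exists_mem_of_blockMultiset_eq (h : blockMultiset blk x S = blockMultiset blk y S)
    {j : ι} (hj : j ∈ S) : ∃ k ∈ S, blk (y k) = blk (x j) := by
  have hmem : blk (x j) ∈ blockMultiset blk y S :=
    h ▸ Multiset.mem_sum.2 ⟨j, hj, Multiset.mem_singleton_self _⟩
  simpa [blockMultiset, Multiset.mem_sum, eq_comm] using hmem

end BlockMultiset

section Core

variable {n : ℕ} {H B : Type*} {w : Fin n ≃ H} {blk : H → B} {R : Fin n → WeakOrder H}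
  {x : Fin n → H}

theorem indiff_of_not_blocks (hx : ¬ Blocks w R x) {C : Finset (Fin n)}
    {σ : Equiv.Perm (Fin n)} (hσC : C.image σ = C)
    (hle : ∀ j ∈ C, (R j).rel (w (σ j)) (x j)) : ∀ j ∈ C, (R j).I (w (σ j)) (x j) := by
  intro j hj
  by_contra hnot
  refine hx ⟨C, σ.trans w, ?_, hle, j, hj, hle j hj, fun h => hnot ⟨hle j hj, h⟩⟩
  rw [Equiv.coe_trans, ← Finset.image_image, hσC]

theorem indiff_top_cycle_and_blockMultiset_sdiff (hR : ∀ i, ObjInd blk (R i))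
    (hx : ¬ Blocks w R x) {S C : Finset (Fin n)}
    (hbal : blockMultiset blk x S = blockMultiset blk w S) (hCS : C ⊆ S)
    {σ : Equiv.Perm (Fin n)} (hσC : C.image σ = C)
    (hbest : ∀ j ∈ C, ∀ k ∈ S, (R j).rel (w (σ j)) (w k)) :
    (∀ j ∈ C, (R j).I (w (σ j)) (x j)) ∧
      blockMultiset blk x (S \ C) = blockMultiset blk w (S \ C) := by
  have hle : ∀ j ∈ C, (R j).rel (w (σ j)) (x j) := by
    intro j hj
    obtain ⟨k, hk, hblk⟩ := exists_mem_of_blockMultiset_eq hbal (hCS hj)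
    exact (R j).trans _ _ _ (hbest j hj k hk) ((hR j _ _).2 hblk).1
  have hI := indiff_of_not_blocks hx hσC hle
  refine ⟨hI, blockMultiset_sdiff hbal ?_ hCS⟩
  calc blockMultiset blk x C = blockMultiset blk (w ∘ σ) C :=
        Finset.sum_congr rfl fun j hj => by rw [Function.comp_apply, (hR j _ _).1 (hI j hj)]
    _ = blockMultiset blk w C := blockMultiset_comp_of_image_eq σ.injective.injOn hσC

theorem indiff_of_blockMultiset_eq (hR : ∀ i, ObjInd blk (R i)) {y : Fin n → H}
    (hx : ¬ Blocks w R x) (hy : ¬ Blocks w R y) (S : Finset (Fin n))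
    (hbalx : blockMultiset blk x S = blockMultiset blk w S)
    (hbaly : blockMultiset blk y S = blockMultiset blk w S) :
    ∀ i ∈ S, (R i).I (x i) (y i) := by
  induction S using Finset.strongInduction with
  | H S ih =>
    rcases S.eq_empty_or_nonempty with rfl | hS
    · simp
    choose f hfS hfbest using fun i => (R i).exists_forall_rel w hS
    have : Nonempty (Fin n) := ⟨hS.choose⟩
    obtain ⟨σ, hσf⟩ := Function.exists_perm_eqOn_periodicPts f
    set C := (Function.periodicPts f).toFinset
    have hCS : C ⊆ S := fun i hi => by
      obtain ⟨j, rfl⟩ := Function.periodicPts_subset_range (Set.mem_toFinset.1 hi)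
      exact hfS j
    have hσC : C.image σ = C := by
      apply Finset.coe_injective
      rw [Finset.coe_image, Set.coe_toFinset, hσf.image_eq,
        (Function.bijOn_periodicPts f).image_eq]
    have hbest : ∀ j ∈ C, ∀ k ∈ S, (R j).rel (w (σ j)) (w k) := fun j hj => by
      rw [hσf (Set.mem_toFinset.1 hj)]
      exact hfbest j
    obtain ⟨hIx, hbalx'⟩ := indiff_top_cycle_and_blockMultiset_sdiff hR hx hbalx hCS hσC hbest
    obtain ⟨hIy, hbaly'⟩ := indiff_top_cycle_and_blockMultiset_sdiff hR hy hbaly hCS hσC hbest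
    intro i hi
    by_cases hiC : i ∈ C
    · exact (hIx i hiC).symm.trans (hIy i hiC)
    · have hCne : C.Nonempty := by simpa [C] using Function.periodicPts_nonempty f
      exact ih _ (Finset.sdiff_ssubset hCS hCne) hbalx' hbaly' i (Finset.mem_sdiff.2 ⟨hi, hiC⟩)

end Core

/-- under objective indifferences the core is essentially
single-valued: any two core allocations leave every agent indifferent. -/
theorem core_essentially_single_valued_objInd {n : ℕ} {H B : Type*} (w : Fin n ≃ H)
    (blk : H → B) (R : Fin n → WeakOrder H) (hR : ∀ i, ObjInd blk (R i))
    (x y : Fin n ≃ H) (hx : ¬ Blocks w R ⇑x) (hy : ¬ Blocks w R ⇑y) :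
    ∀ i, (R i).I (x i) (y i) := fun i =>
  indiff_of_blockMultiset_eq hR hx hy Finset.univ (blockMultiset_univ_of_equiv x w)
    (blockMultiset_univ_of_equiv y w) i (Finset.mem_univ i)

end ShapleyScarf
end

section
/- In the two-agent market with agent 1 indifferent between w_1 and w_2, agent 2 strictly preferring w_1 to w_2, and the tie-breaking profile in which both agents' tie-breaking order ranks agent 1 first, TTC with fixed tie-breaking assigns each agent their own endowment, which is Pareto dominated by the swap allocation (w_2, w_1). Hence TTC with fixed tie-breaking is not Pareto efficient under general indifferences. -/
open scoped Classical

namespace ShapleyScarf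

/-- two-agent failure of Pareto efficiency under general
indifferences: with `w₁ I₁ w₂`, `w₁ P₂ w₂`, and tie-breaking ranking agent 1 first
for both agents, `TTC_≻` gives each agent his endowment, which is Pareto dominated
by the swap `(w₂, w₁)`. -/
theorem TTCtb_not_paretoEfficient_example (R : Fin 2 → WeakOrder (Fin 2))
    (h1 : (R 0).I 0 1) (h2 : (R 1).P 0 1) :
    TTCtb (Equiv.refl (Fin 2)) R (fun _ a b => a < b) = id ∧
    ParetoDom R (⇑(Equiv.swap (0 : Fin 2) 1))
      (TTCtb (Equiv.refl (Fin 2)) R (fun _ a b => a < b)) := by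
  classical
  set pref : Fin 2 → Fin 2 → Fin 2 → Prop :=
    fun i => tieBroken (Equiv.refl (Fin 2)) (R i) (fun a b => a < b) with hpref
  have hp01 : ∀ i : Fin 2, pref i 0 1 := by
    intro i
    fin_cases i
    · exact Or.inr ⟨h1, by decide⟩
    · exact Or.inl h2
  have hp10 : ∀ i : Fin 2, ¬ pref i 1 0 := by
    intro i
    fin_cases i
    · rintro (⟨_, hn⟩ | ⟨_, hlt⟩)
      · exact hn h1.1
      · exact absurd hlt (by decide)
    · rintro (⟨_, hn⟩ | ⟨_, hlt⟩)
      · exact hn h2.1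
      · exact absurd hlt (by decide)
  -- pointing on univ
  have hfilt : ∀ i : Fin 2,
      (Finset.univ.filter fun m : Fin 2 => ∀ j ∈ (Finset.univ : Finset (Fin 2)),
        j = m ∨ pref i ((Equiv.refl (Fin 2)) m) ((Equiv.refl (Fin 2)) j)) = {0} := by
    intro i
    ext m
    simp only [Finset.mem_filter, Finset.mem_univ, true_and, Finset.mem_singleton,
      Equiv.refl_apply]
    constructor
    · intro h
      fin_cases m
      · rfl
      · exact absurd ((h 0 (by simp)).resolve_left (by decide)) (hp10 i)
    · rintro rfl j _
      fin_cases j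
      · exact Or.inl rfl
      · exact Or.inr (hp01 i)
  have hpoint : ∀ i : Fin 2, point (Equiv.refl (Fin 2)) (pref i) Finset.univ i = 0 := by
    intro i
    unfold point
    rw [hfilt i]
    rw [dif_pos (Finset.singleton_nonempty 0)]
    exact Finset.min'_singleton 0
  have hcyc : cycleAgents (Equiv.refl (Fin 2)) pref (Finset.univ) = {0} := by
    unfold cycleAgents
    ext i
    simp only [Finset.mem_filter, Finset.mem_univ, true_and, Finset.mem_singleton]
    have hfun : ∀ j : Fin 2, point (Equiv.refl (Fin 2)) (pref j) Finset.univ j = 0 := hpoint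
    constructor
    · rintro ⟨k, hk, hit⟩
      obtain ⟨m, rfl⟩ := Nat.exists_eq_add_of_lt hk
      rw [Nat.zero_add, Function.iterate_succ_apply'] at hit
      rw [← hit, hfun]
    · rintro rfl
      exact ⟨1, by decide, by simp [hfun]⟩
  -- second round: S = {1}
  have hS2 : (Finset.univ \ ({0} : Finset (Fin 2))) = {1} := by decide
  have hfilt2 :
      (({1} : Finset (Fin 2)).filter fun m : Fin 2 => ∀ j ∈ ({1} : Finset (Fin 2)),
        j = m ∨ pref 1 ((Equiv.refl (Fin 2)) m) ((Equiv.refl (Fin 2)) j)) = {1} := by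
    ext m
    simp only [Finset.mem_filter, Finset.mem_singleton]
    constructor
    · rintro ⟨h, _⟩; exact h
    · rintro rfl
      refine ⟨rfl, ?_⟩
      rintro j hj
      exact Or.inl hj
  have hpoint2 : point (Equiv.refl (Fin 2)) (pref 1) ({1} : Finset (Fin 2)) 1 = 1 := by
    unfold point
    rw [hfilt2, dif_pos (Finset.singleton_nonempty 1)]
    exact Finset.min'_singleton 1
  have hcyc2 : (1 : Fin 2) ∈ cycleAgents (Equiv.refl (Fin 2)) pref ({1} : Finset (Fin 2)) := by
    unfold cycleAgents
    simp only [Finset.mem_filter, Finset.mem_singleton]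
    exact ⟨by simp, 1, by decide, by simp [hpoint2]⟩
  have hTTC : TTCtb (Equiv.refl (Fin 2)) R (fun _ a b => a < b) = id := by
    funext i
    show TTCaux (Equiv.refl (Fin 2)) pref 2 Finset.univ i = i
    fin_cases i
    · show TTCaux (Equiv.refl (Fin 2)) pref (1+1) Finset.univ 0 = 0
      rw [TTCaux, if_pos (by rw [hcyc]; exact Finset.mem_singleton_self 0), hpoint 0]
      rfl
    · show TTCaux (Equiv.refl (Fin 2)) pref (1+1) Finset.univ 1 = 1
      rw [TTCaux, if_neg (by rw [hcyc]; decide), hcyc, hS2]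
      show TTCaux (Equiv.refl (Fin 2)) pref (0+1) {1} 1 = 1
      rw [TTCaux, if_pos hcyc2, hpoint2]
      rfl
  refine ⟨hTTC, ?_⟩
  rw [hTTC]
  constructor
  · intro i
    fin_cases i
    · simpa [Equiv.swap_apply_left] using h1.2
    · simpa [Equiv.swap_apply_right] using h2.1
  · refine ⟨1, ?_⟩
    simpa [Equiv.swap_apply_right] using h2

end ShapleyScarf
end

section
/- Fix (N, H, w) and a domain 𝓡. Let R_α, R_β ∈ 𝓡 and h_1, h_2 ∈ H. Suppose A satisfies {i : w_i P_α h_1} ⊆ A ⊆ {i : w_i R_α h_1} and B satisfies {i ∈ A^c : w_i P_β h_2} ⊆ B ⊆ {i ∈ A^c : w_i R_β h_2}. Let R be any profile with R_i = R_α for all i ∈ A and R_i = R_β for all i ∈ B, and let ≻ be any tie-breaking profile in which every agent ranks himself first (i ≻_i j for all j ≠ i). Then TTC_≻(R) assigns each agent in A ∪ B his own endowment: x_i = w_i for all i ∈ A ∪ B. -/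
open scoped Classical

namespace ShapleyScarf

section Aux
variable {n : ℕ} {H : Type*}

lemma point_mem_of_mem (w : Fin n ≃ H) (p : H → H → Prop) {S : Finset (Fin n)} {i : Fin n}
    (hi : i ∈ S) : point w p S i ∈ S := by
  unfold point
  split
  · next h => exact (Finset.mem_filter.mp (Finset.min'_mem _ h)).1
  · exact hi

lemma point_self_or (w : Fin n ≃ H) (p : H → H → Prop) {S : Finset (Fin n)} {i : Fin n}
    (hi : i ∈ S) : point w p S i = i ∨ p (w (point w p S i)) (w i) := by
  unfold point
  split
  · next h =>
    have hm := Finset.mem_filter.mp (Finset.min'_mem _ h)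
    rcases hm.2 i hi with h' | h'
    · exact Or.inl h'.symm
    · exact Or.inr h'
  · exact Or.inl rfl

lemma cycleAgents_subset (w : Fin n ≃ H) (pref : Fin n → H → H → Prop)
    (S : Finset (Fin n)) : cycleAgents w pref S ⊆ S := Finset.filter_subset _ _

lemma pointmap_mem_cycleAgents (w : Fin n ≃ H) (pref : Fin n → H → H → Prop)
    {S : Finset (Fin n)} {i : Fin n} (hi : i ∈ cycleAgents w pref S) :
    point w (pref i) S i ∈ cycleAgents w pref S := by
  rw [cycleAgents, Finset.mem_filter] at hi ⊢
  obtain ⟨hiS, k, hk, hfix⟩ := hi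
  refine ⟨point_mem_of_mem w _ hiS, k, hk, ?_⟩
  show (fun j => point w (pref j) S j)^[k] ((fun j => point w (pref j) S j) i)
      = (fun j => point w (pref j) S j) i
  rw [← Function.iterate_succ_apply, Function.iterate_succ_apply', hfix]

lemma pointmap_inj (w : Fin n ≃ H) (pref : Fin n → H → H → Prop)
    {S : Finset (Fin n)} {i j : Fin n}
    (hi : i ∈ cycleAgents w pref S) (hj : j ∈ cycleAgents w pref S)
    (hij : point w (pref i) S i = point w (pref j) S j) : i = j := by
  set p := fun a => point w (pref a) S a with hp
  rw [cycleAgents, Finset.mem_filter] at hi hj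
  obtain ⟨-, k, hk, hki⟩ := hi
  obtain ⟨-, l, hl, hlj⟩ := hj
  have hik : p^[k * l] i = i := by
    rw [Function.iterate_mul]; exact Function.iterate_fixed hki l
  have hjl : p^[k * l] j = j := by
    rw [mul_comm, Function.iterate_mul]; exact Function.iterate_fixed hlj k
  obtain ⟨m, hm⟩ : ∃ m, k * l = m + 1 :=
    ⟨k * l - 1, (Nat.succ_pred_eq_of_pos (Nat.mul_pos hk hl)).symm⟩
  rw [hm] at hik hjl
  calc i = p^[m + 1] i := hik.symm
    _ = p^[m] (p i) := Function.iterate_succ_apply p m i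
    _ = p^[m] (p j) := by rw [show p i = p j from hij]
    _ = p^[m + 1] j := (Function.iterate_succ_apply p m j).symm
    _ = j := hjl

lemma TTCaux_mem_image (w : Fin n ≃ H) (pref : Fin n → H → H → Prop) :
    ∀ (fuel : ℕ) (S : Finset (Fin n)) (i : Fin n), i ∈ S →
      ∃ j ∈ S, TTCaux w pref fuel S i = w j
  | 0, S, i, hi => ⟨i, hi, rfl⟩
  | fuel + 1, S, i, hi => by
    rw [TTCaux]
    split
    · exact ⟨_, point_mem_of_mem w _ hi, rfl⟩
    · next h =>
      obtain ⟨j, hj, hj2⟩ := TTCaux_mem_image w pref fuel (S \ cycleAgents w pref S) i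
        (Finset.mem_sdiff.mpr ⟨hi, h⟩)
      exact ⟨j, (Finset.sdiff_subset) hj, hj2⟩

lemma TTCaux_inj (w : Fin n ≃ H) (pref : Fin n → H → H → Prop) :
    ∀ (fuel : ℕ) (S : Finset (Fin n)) (i j : Fin n), i ∈ S → j ∈ S →
      TTCaux w pref fuel S i = TTCaux w pref fuel S j → i = j
  | 0, S, i, j, _, _, h => w.injective h
  | fuel + 1, S, i, j, hi, hj, h => by
    rw [TTCaux, TTCaux] at h
    by_cases hiC : i ∈ cycleAgents w pref S <;> by_cases hjC : j ∈ cycleAgents w pref S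
    · rw [if_pos hiC, if_pos hjC] at h
      exact pointmap_inj w pref hiC hjC (w.injective h)
    · exfalso
      rw [if_pos hiC, if_neg hjC] at h
      obtain ⟨k, hk, hk2⟩ := TTCaux_mem_image w pref fuel (S \ cycleAgents w pref S) j
        (Finset.mem_sdiff.mpr ⟨hj, hjC⟩)
      rw [hk2] at h
      have : point w (pref i) S i = k := w.injective h
      exact (Finset.mem_sdiff.mp hk).2 (this ▸ pointmap_mem_cycleAgents w pref hiC)
    · exfalso
      rw [if_neg hiC, if_pos hjC] at h
      obtain ⟨k, hk, hk2⟩ := TTCaux_mem_image w pref fuel (S \ cycleAgents w pref S) i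
        (Finset.mem_sdiff.mpr ⟨hi, hiC⟩)
      rw [hk2] at h
      have : point w (pref j) S j = k := w.injective h.symm
      exact (Finset.mem_sdiff.mp hk).2 (this ▸ pointmap_mem_cycleAgents w pref hjC)
    · rw [if_neg hiC, if_neg hjC] at h
      exact TTCaux_inj w pref fuel (S \ cycleAgents w pref S) i j
        (Finset.mem_sdiff.mpr ⟨hi, hiC⟩) (Finset.mem_sdiff.mpr ⟨hj, hjC⟩) h

lemma TTCaux_IR (w : Fin n ≃ H) (pref : Fin n → H → H → Prop) :
    ∀ (fuel : ℕ) (S : Finset (Fin n)) (i : Fin n), i ∈ S →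
      TTCaux w pref fuel S i = w i ∨ pref i (TTCaux w pref fuel S i) (w i)
  | 0, _, _, _ => Or.inl rfl
  | fuel + 1, S, i, hi => by
    rw [TTCaux]
    split
    · rcases point_self_or w (pref i) hi with h | h
      · exact Or.inl (by rw [h])
      · exact Or.inr h
    · next h =>
      exact TTCaux_IR w pref fuel (S \ cycleAgents w pref S) i
        (Finset.mem_sdiff.mpr ⟨hi, h⟩)

lemma WeakOrder.P_trans {R : WeakOrder H} {a b c : H} (h1 : R.P a b) (h2 : R.P b c) :
    R.P a c :=
  ⟨R.trans _ _ _ h1.1 h2.1, fun h => h2.2 (R.trans _ _ _ h h1.1)⟩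

lemma WeakOrder.P_rel_trans {R : WeakOrder H} {a b c : H} (h1 : R.P a b) (h2 : R.rel b c) :
    R.P a c :=
  ⟨R.trans _ _ _ h1.1 h2, fun h => h1.2 (R.trans _ _ _ h2 h)⟩

end Aux

/-- Lemma: `x = w` on `A ∪ B`: if `A` contains all agents whose
endowment is strictly `R_α`-preferred to `h₁` and only agents whose endowment is
weakly preferred, `B ⊆ Aᶜ` analogously for `R_β` and `h₂`, the profile assigns
`R_α` on `A` and `R_β` on `B`, and every agent's tie-breaking order ranks himself
first, then `TTC_≻(R)` gives every agent in `A ∪ B` his own endowment. -/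
theorem TTCtb_fixes_upper_sets {n : ℕ} {H : Type*} (w : Fin n ≃ H)
    (Rα Rβ : WeakOrder H) (h1 h2 : H) (A B : Finset (Fin n))
    (hA1 : ∀ i, Rα.P (w i) h1 → i ∈ A) (hA2 : ∀ i ∈ A, Rα.rel (w i) h1)
    (hBc : ∀ i ∈ B, i ∉ A)
    (hB1 : ∀ i, i ∉ A → Rβ.P (w i) h2 → i ∈ B) (hB2 : ∀ i ∈ B, Rβ.rel (w i) h2)
    (R : Fin n → WeakOrder H) (hRA : ∀ i ∈ A, R i = Rα) (hRB : ∀ i ∈ B, R i = Rβ)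
    (tb : Fin n → Fin n → Fin n → Prop) (htb : ∀ i, IsTieBreak (tb i))
    (hself : ∀ i j, j ≠ i → tb i i j) :
    ∀ i ∈ A ∪ B, TTCtb w R tb i = w i := by
  set pref : Fin n → H → H → Prop := fun a => tieBroken w (R a) (tb a) with hpref
  set x : Fin n → H := TTCtb w R tb with hx
  have hinj : Function.Injective x := fun i j h =>
    TTCaux_inj w pref n Finset.univ i j (Finset.mem_univ i) (Finset.mem_univ j) h
  -- strict individual rationality
  have hIR : ∀ i, x i = w i ∨ (R i).P (x i) (w i) := by
    intro i
    rcases TTCaux_IR w pref n Finset.univ i (Finset.mem_univ i) with h | h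
    · exact Or.inl h
    · rcases h with hP | ⟨hI, hlt⟩
      · exact Or.inr hP
      · exfalso
        rw [Equiv.symm_apply_apply] at hlt
        set j := w.symm (TTCaux w pref n Finset.univ i) with hjdef
        by_cases hji : j = i
        · rw [hji] at hlt; exact (htb i).2.2 i hlt
        · exact (htb i).2.2 i ((htb i).2.1 (hself i j hji) hlt)
  have hwf : WellFounded (fun a b : Fin n => Rα.P (w a) (w b)) := by
    have : IsTrans (Fin n) (fun a b : Fin n => Rα.P (w a) (w b)) :=
      ⟨fun a b c h1 h2 => WeakOrder.P_trans h1 h2⟩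
    have : IsIrrefl (Fin n) (fun a b : Fin n => Rα.P (w a) (w b)) :=
      ⟨fun a h => h.2 h.1⟩
    exact Finite.wellFounded_of_trans_of_irrefl _
  have hwfβ : WellFounded (fun a b : Fin n => Rβ.P (w a) (w b)) := by
    have : IsTrans (Fin n) (fun a b : Fin n => Rβ.P (w a) (w b)) :=
      ⟨fun a b c h1 h2 => WeakOrder.P_trans h1 h2⟩
    have : IsIrrefl (Fin n) (fun a b : Fin n => Rβ.P (w a) (w b)) :=
      ⟨fun a h => h.2 h.1⟩
    exact Finite.wellFounded_of_trans_of_irrefl _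
  -- Step 1: every agent in A keeps his endowment
  have hAfix : ∀ i ∈ A, x i = w i := by
    by_contra hcon
    push_neg at hcon
    obtain ⟨i0, hi0A, hi0⟩ := hcon
    have hne : {a : Fin n | a ∈ A ∧ x a ≠ w a}.Nonempty := ⟨i0, hi0A, hi0⟩
    obtain ⟨m, ⟨hmA, hm⟩, hmin⟩ := hwf.has_min _ hne
    have hPm : Rα.P (x m) (w m) := by
      rcases hIR m with h | h
      · exact absurd h hm
      · rwa [hRA m hmA] at h
    set j := w.symm (x m) with hj
    have hxm : x m = w j := (w.apply_symm_apply (x m)).symm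
    rw [hxm] at hPm
    have hjA : j ∈ A := hA1 j (WeakOrder.P_rel_trans hPm (hA2 m hmA))
    have hjx : x j ≠ w j := by
      intro h
      have hjm : j = m := hinj (h.trans hxm.symm)
      rw [hjm] at hPm
      exact hPm.2 hPm.1
    exact hmin j ⟨hjA, hjx⟩ hPm
  -- Step 2: every agent in B keeps his endowment
  have hBfix : ∀ i ∈ B, x i = w i := by
    by_contra hcon
    push_neg at hcon
    obtain ⟨i0, hi0B, hi0⟩ := hcon
    have hne : {a : Fin n | a ∈ B ∧ x a ≠ w a}.Nonempty := ⟨i0, hi0B, hi0⟩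
    obtain ⟨m, ⟨hmB, hm⟩, hmin⟩ := hwfβ.has_min _ hne
    have hPm : Rβ.P (x m) (w m) := by
      rcases hIR m with h | h
      · exact absurd h hm
      · rwa [hRB m hmB] at h
    set j := w.symm (x m) with hj
    have hxm : x m = w j := (w.apply_symm_apply (x m)).symm
    rw [hxm] at hPm
    have hjx : x j ≠ w j := by
      intro h
      have hjm : j = m := hinj (h.trans hxm.symm)
      rw [hjm] at hPm
      exact hPm.2 hPm.1
    have hjnA : j ∉ A := fun hjA => hjx (hAfix j hjA)
    have hjB : j ∈ B := hB1 j hjnA (WeakOrder.P_rel_trans hPm (hB2 m hmB))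
    exact hmin j ⟨hjB, hjx⟩ hPm
  intro i hi
  rcases Finset.mem_union.mp hi with h | h
  · exact hAfix i h
  · exact hBfix i h

end ShapleyScarf
end

section
/- Fix a market (N, H, w, R) and tie-breaking profile ≻ in which every agent ranks himself first in his own tie-breaking order. Then TTC_≻ satisfies: for every agent i, if TTC_≻(R)_i I_i w_i then TTC_≻(R)_i = w_i (an agent indifferent between his assignment and his endowment receives exactly his endowment). -/
open scoped Classical

namespace ShapleyScarf

lemma TTCaux_cases {n : ℕ} {H : Type*} (w : Fin n ≃ H) (pref : Fin n → H → H → Prop) :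
    ∀ (fuel : ℕ) (S : Finset (Fin n)) (i : Fin n),
      TTCaux w pref fuel S i = w i ∨
        ∃ S' : Finset (Fin n), i ∈ S' ∧
          TTCaux w pref fuel S i = w (point w (pref i) S' i) := by
  intro fuel
  induction fuel with
  | zero => intro S i; exact Or.inl rfl
  | succ fuel ih =>
      intro S i
      by_cases h : i ∈ cycleAgents w pref S
      · refine Or.inr ⟨S, ?_, ?_⟩
        · exact Finset.mem_of_mem_filter i h
        · simp [TTCaux, h]
      · have := ih (S \ cycleAgents w pref S) i
        simpa [TTCaux, h] using this

/-- if every agent's tie-breaking order ranks himself first, then any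
agent indifferent between his `TTC_≻` assignment and his endowment receives exactly
his endowment. -/
theorem TTCtb_indiff_own_endowment {n : ℕ} {H : Type*} (w : Fin n ≃ H)
    (R : Fin n → WeakOrder H) (tb : Fin n → Fin n → Fin n → Prop)
    (htb : ∀ i, IsTieBreak (tb i)) (hself : ∀ i j, j ≠ i → tb i i j) :
    ∀ i, (R i).I (TTCtb w R tb i) (w i) → TTCtb w R tb i = w i := by
  intro i hI
  set pref : Fin n → H → H → Prop := fun a => tieBroken w (R a) (tb a) with hpref
  rcases TTCaux_cases w pref n Finset.univ i with h | ⟨S, hiS, h⟩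
  · exact h
  · have hx : TTCtb w R tb i = TTCaux w pref n Finset.univ i := rfl
    rw [hx, h] at hI ⊢
    unfold point
    split_ifs with hne
    · set m := (S.filter fun m => ∀ j ∈ S, j = m ∨ pref i (w m) (w j)).min' hne with hm
      have hmem := Finset.min'_mem _ hne
      rw [Finset.mem_filter] at hmem
      have hbest := hmem.2 i hiS
      rcases hbest with heq | hb
      · rw [heq]
      · -- hb : pref i (w m) (w i)
        -- hI (after rw) involves point _, need to rewrite hI in terms of m
        exfalso
        rw [point, dif_pos hne, ← hm] at hI
        rcases hb with hP | ⟨hInd, hlt⟩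
        · exact hP.2 hI.2
        · simp only [Equiv.symm_apply_apply] at hlt
          rw [← hm] at hlt
          by_cases hmi : m = i
          · rw [hmi] at hlt
            exact (htb i).2.2 i hlt
          · have := (htb i).2.1 ((hself i m hmi)) hlt
            exact (htb i).2.2 i this
    · rfl

end ShapleyScarf
end

section
/- Fix a market (N, H, w, R) and tie-breaking profile ≻, and let x = TTC_≻(R). If agent i is assigned in the k-th executed trading cycle and x_j P_i x_i for some agent j, then agent j was assigned in one of the first k−1 cycles. -/
open scoped Classical

namespace ShapleyScarf

section Aux
variable {n : ℕ} {H : Type*}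

lemma tb_total (w : Fin n ≃ H) (R : WeakOrder H) {lt : Fin n → Fin n → Prop}
    (h : IsTieBreak lt) : ∀ x y : H, x ≠ y → tieBroken w R lt x y ∨ tieBroken w R lt y x := by
  intro x y hxy
  by_cases h1 : R.rel x y <;> by_cases h2 : R.rel y x
  · have hne : w.symm x ≠ w.symm y := fun he => hxy (w.symm.injective he)
    rcases h.1 _ _ hne with hl | hl
    · exact Or.inl (Or.inr ⟨⟨h1, h2⟩, hl⟩)
    · exact Or.inr (Or.inr ⟨⟨h2, h1⟩, hl⟩)
  · exact Or.inl (Or.inl ⟨h1, h2⟩)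
  · exact Or.inr (Or.inl ⟨h2, h1⟩)
  · rcases R.total x y with h | h <;> contradiction

lemma tb_trans (w : Fin n ≃ H) (R : WeakOrder H) {lt : Fin n → Fin n → Prop}
    (h : IsTieBreak lt) : Transitive (tieBroken w R lt) := by
  intro a b c hab hbc
  rcases hab with ⟨h1, h2⟩ | ⟨⟨h1, h2⟩, hl⟩ <;> rcases hbc with ⟨h3, h4⟩ | ⟨⟨h3, h4⟩, hl'⟩
  · exact Or.inl ⟨R.trans _ _ _ h1 h3, fun hh => h4 (R.trans _ _ _ hh h1)⟩
  · exact Or.inl ⟨R.trans _ _ _ h1 h3, fun hh => h2 (R.trans _ _ _ h3 hh)⟩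
  · exact Or.inl ⟨R.trans _ _ _ h1 h3, fun hh => h4 (R.trans _ _ _ hh h1)⟩
  · exact Or.inr ⟨⟨R.trans _ _ _ h1 h3, R.trans _ _ _ h4 h2⟩, h.2.1 hl hl'⟩

lemma tb_irrefl (w : Fin n ≃ H) (R : WeakOrder H) {lt : Fin n → Fin n → Prop}
    (h : IsTieBreak lt) : ∀ x : H, ¬ tieBroken w R lt x x := by
  rintro x (⟨h1, h2⟩ | ⟨-, hl⟩)
  · exact h2 h1
  · exact h.2.2 _ hl

lemma exists_best (w : Fin n ≃ H) (pref : H → H → Prop)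
    (htot : ∀ a b : H, a ≠ b → pref a b ∨ pref b a) (htr : Transitive pref) :
    ∀ S : Finset (Fin n), S.Nonempty →
      ∃ m ∈ S, ∀ j ∈ S, j = m ∨ pref (w m) (w j) := by
  intro S
  induction S using Finset.induction_on with
  | empty => intro h; exact absurd rfl h.ne_empty
  | @insert a S ha ih =>
    intro _
    rcases S.eq_empty_or_nonempty with rfl | hS
    · exact ⟨a, by simp, by simp⟩
    · obtain ⟨m, hm, hbest⟩ := ih hS
      have hne : a ≠ m := fun h => ha (h ▸ hm)
      have hwne : w a ≠ w m := fun h => hne (w.injective h)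
      rcases htot (w a) (w m) hwne with h | h
      · refine ⟨a, Finset.mem_insert_self _ _, ?_⟩
        intro j hj
        rcases Finset.mem_insert.mp hj with rfl | hj
        · exact Or.inl rfl
        · rcases hbest j hj with rfl | hp
          · exact Or.inr h
          · exact Or.inr (htr h hp)
      · refine ⟨m, Finset.mem_insert_of_mem hm, ?_⟩
        intro j hj
        rcases Finset.mem_insert.mp hj with rfl | hj
        · exact Or.inr h
        · exact hbest j hj

lemma point_spec (w : Fin n ≃ H) (pref : H → H → Prop) {S : Finset (Fin n)}
    (hS : S.Nonempty) (htot : ∀ a b : H, a ≠ b → pref a b ∨ pref b a)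
    (htr : Transitive pref) (i : Fin n) :
    point w pref S i ∈ S ∧
      ∀ j ∈ S, j = point w pref S i ∨ pref (w (point w pref S i)) (w j) := by
  obtain ⟨m, hm, hb⟩ := exists_best w pref htot htr S hS
  have hne : (S.filter fun m => ∀ j ∈ S, j = m ∨ pref (w m) (w j)).Nonempty :=
    ⟨m, Finset.mem_filter.mpr ⟨hm, hb⟩⟩
  rw [point, dif_pos hne]
  exact Finset.mem_filter.mp (Finset.min'_mem _ hne)

lemma cycle_nonempty (w : Fin n ≃ H) (pref : Fin n → H → H → Prop)
    {S : Finset (Fin n)} (hS : S.Nonempty)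
    (htot : ∀ a, ∀ x y : H, x ≠ y → pref a x y ∨ pref a y x)
    (htr : ∀ a, Transitive (pref a)) :
    (cycleAgents w pref S).Nonempty := by
  have hfS : ∀ j, (fun j => point w (pref j) S j) j ∈ S :=
    fun j => (point_spec w (pref j) hS (htot j) (htr j) j).1
  obtain ⟨a, ha⟩ := hS
  have hiter : ∀ k, (fun j => point w (pref j) S j)^[k] a ∈ S := by
    intro k
    cases k with
    | zero => exact ha
    | succ k => rw [Function.iterate_succ_apply']; exact hfS _
  obtain ⟨k, l, hkl, heq⟩ :
      ∃ k l, k < l ∧ (fun j => point w (pref j) S j)^[k] a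
        = (fun j => point w (pref j) S j)^[l] a := by
    obtain ⟨x, y, hxy, he⟩ :=
      Finite.exists_ne_map_eq_of_infinite (fun k : ℕ => (fun j => point w (pref j) S j)^[k] a)
    rcases hxy.lt_or_gt with h | h
    · exact ⟨x, y, h, he⟩
    · exact ⟨y, x, h, he.symm⟩
  refine ⟨(fun j => point w (pref j) S j)^[k] a,
    Finset.mem_filter.mpr ⟨hiter k, l - k, by omega, ?_⟩⟩
  rw [← Function.iterate_add_apply, show l - k + k = l by omega, ← heq]

lemma ttcaux_mem (w : Fin n ≃ H) (pref : Fin n → H → H → Prop)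
    (htot : ∀ a, ∀ x y : H, x ≠ y → pref a x y ∨ pref a y x)
    (htr : ∀ a, Transitive (pref a)) :
    ∀ fuel (S : Finset (Fin n)) (j : Fin n), j ∈ S →
      ∃ m ∈ S, TTCaux w pref fuel S j = w m := by
  intro fuel
  induction fuel with
  | zero => intro S j hj; exact ⟨j, hj, rfl⟩
  | succ fuel ih =>
    intro S j hj
    rw [TTCaux]
    by_cases h : j ∈ cycleAgents w pref S
    · rw [if_pos h]
      exact ⟨point w (pref j) S j, (point_spec w (pref j) ⟨j, hj⟩ (htot j) (htr j) j).1, rfl⟩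
    · rw [if_neg h]
      obtain ⟨m, hm, he⟩ := ih (S \ cycleAgents w pref S) j (Finset.mem_sdiff.mpr ⟨hj, h⟩)
      exact ⟨m, (Finset.mem_sdiff.mp hm).1, he⟩

lemma round_pos (w : Fin n ≃ H) (pref : Fin n → H → H → Prop) :
    ∀ fuel (S : Finset (Fin n)) (i : Fin n), 1 ≤ TTCroundAux w pref fuel S i := by
  intro fuel S i
  cases fuel with
  | zero => exact le_refl 1
  | succ fuel =>
    rw [TTCroundAux]
    split
    · exact le_refl 1
    · omega

lemma ttc_main (w : Fin n ≃ H) (pref : Fin n → H → H → Prop)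
    (htot : ∀ a, ∀ x y : H, x ≠ y → pref a x y ∨ pref a y x)
    (htr : ∀ a, Transitive (pref a)) (hirr : ∀ a, ∀ x : H, ¬ pref a x x) :
    ∀ fuel (S : Finset (Fin n)), S.card ≤ fuel → ∀ i j, i ∈ S → j ∈ S →
      pref i (TTCaux w pref fuel S j) (TTCaux w pref fuel S i) →
      TTCroundAux w pref fuel S j < TTCroundAux w pref fuel S i := by
  intro fuel
  induction fuel with
  | zero =>
    intro S hcard i j hi _ _
    have : S = ∅ := Finset.card_eq_zero.mp (Nat.le_zero.mp hcard)
    subst this; simp at hi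
  | succ fuel ih =>
    intro S hcard i j hi hj hp
    have hSne : S.Nonempty := ⟨i, hi⟩
    have hCne : (cycleAgents w pref S).Nonempty := cycle_nonempty w pref hSne htot htr
    have hCsub : cycleAgents w pref S ⊆ S := Finset.filter_subset _ _
    by_cases hiC : i ∈ cycleAgents w pref S
    · exfalso
      have hpt := point_spec w (pref i) hSne (htot i) (htr i) i
      obtain ⟨m, hm, hme⟩ := ttcaux_mem w pref htot htr (fuel + 1) S j hj
      rw [hme, show TTCaux w pref (fuel + 1) S i = w (point w (pref i) S i) from by
        rw [TTCaux, if_pos hiC]] at hp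
      rcases hpt.2 m hm with rfl | h
      · exact hirr i _ hp
      · exact hirr i _ (htr i hp h)
    · have hri : TTCroundAux w pref (fuel + 1) S i
          = TTCroundAux w pref fuel (S \ cycleAgents w pref S) i + 1 := by
        rw [TTCroundAux, if_neg hiC]
      have hcard' : (S \ cycleAgents w pref S).card ≤ fuel := by
        have h1 := Finset.card_sdiff_of_subset hCsub
        have h2 : 1 ≤ (cycleAgents w pref S).card := Finset.card_pos.mpr hCne
        have h3 := Finset.card_le_card hCsub
        omega
      by_cases hjC : j ∈ cycleAgents w pref S
      · rw [hri, show TTCroundAux w pref (fuel + 1) S j = 1 from by rw [TTCroundAux, if_pos hjC]]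
        have := round_pos w pref fuel (S \ cycleAgents w pref S) i
        omega
      · rw [show TTCaux w pref (fuel + 1) S i
            = TTCaux w pref fuel (S \ cycleAgents w pref S) i from by rw [TTCaux, if_neg hiC],
          show TTCaux w pref (fuel + 1) S j
            = TTCaux w pref fuel (S \ cycleAgents w pref S) j from by
            rw [TTCaux, if_neg hjC]] at hp
        rw [hri, show TTCroundAux w pref (fuel + 1) S j
            = TTCroundAux w pref fuel (S \ cycleAgents w pref S) j + 1 from by
            rw [TTCroundAux, if_neg hjC]]
        have := ih (S \ cycleAgents w pref S) hcard' i j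
          (Finset.mem_sdiff.mpr ⟨hi, hiC⟩) (Finset.mem_sdiff.mpr ⟨hj, hjC⟩) hp
        omega

end Aux

/-- if `x = TTC_≻(R)` and agent `i` strictly prefers `x_j` to his own
assignment `x_i`, then `j` was assigned in a strictly earlier executed cycle. -/
theorem TTCtb_better_assigned_earlier {n : ℕ} {H : Type*} (w : Fin n ≃ H)
    (R : Fin n → WeakOrder H) (tb : Fin n → Fin n → Fin n → Prop)
    (htb : ∀ i, IsTieBreak (tb i)) :
    ∀ i j : Fin n, (R i).P (TTCtb w R tb j) (TTCtb w R tb i) →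
      TTCtbRound w R tb j < TTCtbRound w R tb i := by
  intro i j hp
  have h := ttc_main w (fun a => tieBroken w (R a) (tb a))
    (fun a => tb_total w (R a) (htb a)) (fun a => tb_trans w (R a) (htb a))
    (fun a => tb_irrefl w (R a) (htb a)) n Finset.univ (by simp) i j
    (Finset.mem_univ i) (Finset.mem_univ j) (Or.inl hp)
  exact h

end ShapleyScarf
end
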